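/- Let Ω ⊆ ℝ³ be an open set, T > 0, ε > 0 and μ > 0. Let u : ℝ × ℝ³ → ℝ³ and p : ℝ × ℝ³ → ℝ be C² functions such that there is a compact set K ⊂ Ω with u(t,x) = 0 and p(t,x) = 0 for all t ∈ [0,T] and all x ∉ K, and such that on [0,T] × Ω they satisfy the artificial compressibility system ∂ₜu + ∇p = μΔu − (u·∇)u − (1/2)(div u)u and ε ∂ₜp + div u = 0. Define the energy E(t) = ∫_Ω ( (1/2)|u(t,x)|² + (ε/2)|p(t,x)|² ) dx. Then for all t ∈ [0,T] one has the energy identity E(t) + μ ∫₀ᵗ ∫_Ω |∇u(s,x)|² dx ds = E(0). -/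

import Mathlib

/-!
Multiplying the momentum equation by `u`, the continuity equation by `p` and adding gives the
local energy balance `∂ₜ(½|u|² + (ε/2)p²) + μ|∇u|² = div W` with flux
`W = μ (∇u)ᵀu − ½|u|² u − p u`; the term `−½(div u)u` is exactly what turns the cubic terms into a
divergence. Since `u` and `p` vanish off the compact set `K`, the divergence integrates to zero,
so `t ↦ E(t) + μ ∫₀ᵗ ∫ |∇u|²` has zero derivative on `[0, T]`.
-/

open MeasureTheory Set

section Calculus

variable {𝕜 E F : Type*} [NontriviallyNormedField 𝕜] [NormedAddCommGroup E] [NormedSpace 𝕜 E]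
  [NormedAddCommGroup F] [NormedSpace 𝕜 F]

theorem fderiv_piLp_apply {ι : Type*} {G : ι → Type*} [∀ i, NormedAddCommGroup (G i)]
    [∀ i, NormedSpace 𝕜 (G i)] [Fintype ι] {p : ENNReal} [Fact (1 ≤ p)] {f : E → PiLp p G}
    {y : E} (hf : DifferentiableAt 𝕜 f y) (i : ι) (v : E) :
    fderiv 𝕜 (fun x => f x i) y v = fderiv 𝕜 f y v i := by
  have h : HasFDerivAt (fun x => f x i) _ y :=
    (PiLp.hasFDerivAt_apply (𝕜 := 𝕜) p (f y) i).comp y hf.hasFDerivAt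
  rw [h.fderiv]
  rfl

theorem fderiv_apply_eq_zero_of_notMem {f : E → F} {K : Set E} (hK : IsClosed K)
    (hf : ∀ x ∉ K, f x = 0) {x : E} (hx : x ∉ K) (v : E) : fderiv 𝕜 f x v = 0 := by
  have hsupp : tsupport f ⊆ K := closure_minimal (fun y hy => by_contra fun h => hy (hf y h)) hK
  simp [fderiv_of_notMem_tsupport 𝕜 fun h => hx (hsupp h)]

variable {w : 𝕜 × E → F} {t : 𝕜} {x : E}

theorem DifferentiableAt.hasDerivAt_slice_fst (hw : DifferentiableAt 𝕜 w (t, x)) :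
    HasDerivAt (fun s => w (s, x)) (fderiv 𝕜 w (t, x) (1, 0)) t :=
  hw.hasFDerivAt.comp_hasDerivAt t ((hasDerivAt_id t).prodMk (hasDerivAt_const t x))

theorem DifferentiableAt.fderiv_slice_snd_apply (hw : DifferentiableAt 𝕜 w (t, x)) (v : E) :
    fderiv 𝕜 (fun y => w (t, y)) x v = fderiv 𝕜 w (t, x) (0, v) := by
  have h : HasFDerivAt (fun y => w (t, y)) _ x :=
    hw.hasFDerivAt.comp x (hasFDerivAt_prodMk_right t x)
  rw [h.fderiv]
  rfl

theorem DifferentiableAt.fderiv_apply_zero_eq_zero_of_notMem (hw : DifferentiableAt 𝕜 w (t, x))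
    {K : Set E} (hK : IsClosed K) (hw0 : ∀ y ∉ K, w (t, y) = 0) (hx : x ∉ K) (v : E) :
    fderiv 𝕜 w (t, x) (0, v) = 0 := by
  rw [← hw.fderiv_slice_snd_apply]
  exact fderiv_apply_eq_zero_of_notMem hK hw0 hx v

end Calculus

section Integration

variable {E F : Type*} [NormedAddCommGroup E] [NormedSpace ℝ E] [MeasurableSpace E]
  [NormedAddCommGroup F] [NormedSpace ℝ F] {μ : Measure E}

theorem HasCompactSupport.integral_fderiv_apply_eq_zero [FiniteDimensional ℝ E] [BorelSpace E]
    [μ.IsAddHaarMeasure] {g : E → F} (hgs : HasCompactSupport g) (hg : ContDiff ℝ 1 g) (v : E) :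
    ∫ x, fderiv ℝ g x v ∂μ = 0 := by
  have hg' : Integrable (fun x => fderiv ℝ g x v) μ :=
    ((hg.continuous_fderiv one_ne_zero).clm_apply continuous_const).integrable_of_hasCompactSupport
      (hgs.fderiv_apply ℝ v)
  -- integration by parts against the constant function `1`
  simpa using integral_smul_fderiv_eq_neg_fderiv_smul_of_integrable (f := fun _ => (1 : ℝ))
    (μ := μ) (v := v) (by simp) (by simpa using hg')
    (by simpa using hg.continuous.integrable_of_hasCompactSupport hgs)
    (fun _ _ => differentiableAt_const _) (fun x _ => hg.differentiable one_ne_zero x)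

theorem setIntegral_fderiv_apply_zero_eq_zero [FiniteDimensional ℝ E] [BorelSpace E]
    [μ.IsAddHaarMeasure] {w : ℝ × E → F} (hw : ContDiff ℝ 1 w) {t : ℝ} {K : Set E}
    (hK : IsCompact K) (hw0 : ∀ x ∉ K, w (t, x) = 0) (v : E) :
    ∫ x in K, fderiv ℝ w (t, x) (0, v) ∂μ = 0 := by
  have hw1 : Differentiable ℝ w := hw.differentiable one_ne_zero
  calc ∫ x in K, fderiv ℝ w (t, x) (0, v) ∂μ
      = ∫ x, fderiv ℝ (fun y => w (t, y)) x v ∂μ := by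
        rw [setIntegral_eq_integral_of_forall_compl_eq_zero fun x hx =>
          (hw1 _).fderiv_apply_zero_eq_zero_of_notMem hK.isClosed hw0 hx v]
        simp_rw [(hw1 _).fderiv_slice_snd_apply]
    _ = 0 := (HasCompactSupport.intro hK hw0).integral_fderiv_apply_eq_zero (by fun_prop) v

theorem hasDerivAt_setIntegral_of_contDiff [OpensMeasurableSpace E] [SecondCountableTopology E]
    [IsFiniteMeasureOnCompacts μ] [CompleteSpace F] {g : ℝ × E → F} (hg : ContDiff ℝ 1 g)
    {K : Set E} (hK : IsCompact K) (t : ℝ) :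
    HasDerivAt (fun s => ∫ x in K, g (s, x) ∂μ) (∫ x in K, fderiv ℝ g (t, x) (1, 0) ∂μ) t := by
  have hg' : Continuous fun y => fderiv ℝ g y (1, 0) :=
    (hg.continuous_fderiv one_ne_zero).clm_apply continuous_const
  obtain ⟨C, hC⟩ := ((isCompact_closedBall t 1).prod hK).exists_bound_of_continuousOn
    hg'.continuousOn
  refine (hasDerivAt_integral_of_dominated_loc_of_deriv_le (μ := μ.restrict K)
    (F := fun s x => g (s, x)) (F' := fun s x => fderiv ℝ g (s, x) (1, 0)) (bound := fun _ => C)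
    (Metric.ball_mem_nhds t one_pos) ?_ ?_ ?_ ?_
    (integrableOn_const (hK.measure_ne_top (μ := μ))) ?_).2
  · exact .of_forall fun s => (hg.continuous.comp (by fun_prop)).aestronglyMeasurable
  · exact (hg.continuous.comp (by fun_prop)).continuousOn.integrableOn_compact hK
  · exact (hg'.comp (by fun_prop)).aestronglyMeasurable
  · refine (ae_restrict_iff' hK.measurableSet).2 (.of_forall fun x hx s hs => ?_)
    exact hC (s, x) ⟨Metric.ball_subset_closedBall hs, hx⟩
  · exact .of_forall fun x s _ => (hg.differentiable one_ne_zero (s, x)).hasDerivAt_slice_fst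

end Integration

local notation "E3" => EuclideanSpace ℝ (Fin 3)

namespace ArtificialCompressibility

local notation "𝐞" j => EuclideanSpace.single j (1 : ℝ)

-- `fderiv ℝ w y (1, 0)` is `∂ₜw(y)` and `fderiv ℝ w y (0, 𝐞 j)` is `∂ⱼw(y)`.
noncomputable def energyDensity (ε : ℝ) (u : ℝ × E3 → E3) (p : ℝ × E3 → ℝ) (y : ℝ × E3) : ℝ :=
  (1/2) * ∑ i, (u y i) ^ 2 + (ε / 2) * (p y) ^ 2

noncomputable def energyFlux (μ : ℝ) (u : ℝ × E3 → E3) (p : ℝ × E3 → ℝ) (j : Fin 3)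
    (y : ℝ × E3) : ℝ :=
  μ * ∑ i, u y i * fderiv ℝ u y (0, 𝐞 j) i - ((1/2) * ∑ i, (u y i) ^ 2) * u y j - p y * u y j

noncomputable def dissipationDensity (u : ℝ × E3 → E3) (y : ℝ × E3) : ℝ :=
  ∑ i, ∑ j, (fderiv ℝ u y (0, 𝐞 j) i) ^ 2

structure SolvesAt (ε μ : ℝ) (u : ℝ × E3 → E3) (p : ℝ × E3 → ℝ) (y : ℝ × E3) : Prop where
  momentum : ∀ i : Fin 3, fderiv ℝ u y (1, 0) i + fderiv ℝ p y (0, 𝐞 i)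
    = μ * (∑ j, fderiv ℝ (fun y => fderiv ℝ u y (0, 𝐞 j) i) y (0, 𝐞 j))
      - (∑ j, u y j * fderiv ℝ u y (0, 𝐞 j) i)
      - (1/2) * (∑ j, fderiv ℝ u y (0, 𝐞 j) j) * u y i
  continuity : ε * fderiv ℝ p y (1, 0) + (∑ j, fderiv ℝ u y (0, 𝐞 j) j) = 0

variable {ε μ : ℝ} {u : ℝ × E3 → E3} {p : ℝ × E3 → ℝ}

theorem contDiff_energyDensity (hu : ContDiff ℝ 1 u) (hp : ContDiff ℝ 1 p) :
    ContDiff ℝ 1 (energyDensity ε u p) := by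
  unfold energyDensity
  fun_prop

theorem contDiff_energyFlux (hu : ContDiff ℝ 2 u) (hp : ContDiff ℝ 1 p) (j : Fin 3) :
    ContDiff ℝ 1 (energyFlux μ u p j) := by
  have hdu : ContDiff ℝ 1 (fun y => fderiv ℝ u y (0, 𝐞 j)) :=
    (hu.fderiv_right le_rfl).clm_apply contDiff_const
  have hu1 : ContDiff ℝ 1 u := hu.of_le one_le_two
  unfold energyFlux
  fun_prop

theorem continuous_dissipationDensity (hu : ContDiff ℝ 1 u) :
    Continuous (dissipationDensity u) := by
  have hdu : Continuous (fderiv ℝ u) := hu.continuous_fderiv one_ne_zero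
  unfold dissipationDensity
  fun_prop

theorem fderiv_energyDensity_apply (hu : Differentiable ℝ u) (hp : Differentiable ℝ p)
    (y v : ℝ × E3) :
    fderiv ℝ (energyDensity ε u p) y v
      = ∑ i, u y i * fderiv ℝ u y v i + ε * (p y * fderiv ℝ p y v) := by
  unfold energyDensity
  simp (disch := fun_prop) only [fderiv_fun_add, fderiv_const_mul, fderiv_fun_sum, fderiv_fun_pow,
    add_apply, smul_apply, smul_eq_mul, FunLike.coe_sum, Finset.sum_apply, fderiv_piLp_apply (hu y)]
  simp only [Fin.sum_univ_three]
  ring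

theorem fderiv_energyFlux_apply (hu : ContDiff ℝ 2 u) (hp : Differentiable ℝ p)
    (j : Fin 3) (y v : ℝ × E3) :
    fderiv ℝ (energyFlux μ u p j) y v
      = μ * ∑ i, (fderiv ℝ u y v i * fderiv ℝ u y (0, 𝐞 j) i
          + u y i * fderiv ℝ (fun y => fderiv ℝ u y (0, 𝐞 j) i) y v)
        - (∑ i, u y i * fderiv ℝ u y v i) * u y j
        - ((1/2) * ∑ i, (u y i) ^ 2) * fderiv ℝ u y v j
        - (fderiv ℝ p y v * u y j + p y * fderiv ℝ u y v j) := by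
  have hu1 : Differentiable ℝ u := hu.differentiable two_ne_zero
  have hdu : Differentiable ℝ (fun y => fderiv ℝ u y (0, 𝐞 j)) :=
    ((hu.fderiv_right le_rfl).clm_apply contDiff_const).differentiable one_ne_zero
  unfold energyFlux
  simp (disch := fun_prop) only [fderiv_fun_sub, fderiv_const_mul, fderiv_fun_sum, fderiv_fun_pow,
    fderiv_fun_mul, add_apply, sub_apply, smul_apply, smul_eq_mul, FunLike.coe_sum,
    Finset.sum_apply, fderiv_piLp_apply (hu1 y)]
  simp only [Fin.sum_univ_three]
  ring

theorem SolvesAt.energy_balance {y : ℝ × E3} (h : SolvesAt ε μ u p y) (hu : ContDiff ℝ 2 u)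
    (hp : Differentiable ℝ p) :
    fderiv ℝ (energyDensity ε u p) y (1, 0)
      = ∑ j, fderiv ℝ (energyFlux μ u p j) y (0, 𝐞 j) - μ * dissipationDensity u y := by
  simp only [fderiv_energyDensity_apply (hu.differentiable two_ne_zero) hp,
    fderiv_energyFlux_apply hu hp, dissipationDensity]
  have hm := h.momentum
  have hc := h.continuity
  simp only [Fin.sum_univ_three] at hm hc ⊢
  linear_combination u y 0 * hm 0 + u y 1 * hm 1 + u y 2 * hm 2 + p y * hc

theorem setIntegral_fderiv_energyDensity_time {K : Set E3} (hK : IsCompact K) {t : ℝ}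
    (hu : ContDiff ℝ 2 u) (hp : ContDiff ℝ 1 p) (hsol : ∀ x ∈ K, SolvesAt ε μ u p (t, x))
    (hsupp : ∀ x ∉ K, u (t, x) = 0 ∧ p (t, x) = 0) :
    ∫ x in K, fderiv ℝ (energyDensity ε u p) (t, x) (1, 0)
      = -μ * ∫ x in K, dissipationDensity u (t, x) := by
  have hflux : ∀ j, ∫ x in K, fderiv ℝ (energyFlux μ u p j) (t, x) (0, 𝐞 j) = 0 := fun j =>
    setIntegral_fderiv_apply_zero_eq_zero (contDiff_energyFlux hu hp j) hK
      (fun x hx => by simp [energyFlux, hsupp x hx]) _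
  have hfluxc : ∀ j, Continuous fun y => fderiv ℝ (energyFlux μ u p j) y (0, 𝐞 j) := fun j =>
    ((contDiff_energyFlux hu hp j).continuous_fderiv one_ne_zero).clm_apply continuous_const
  have hint {f : ℝ × E3 → ℝ} (hf : Continuous f) : IntegrableOn (fun x => f (t, x)) K :=
    (hf.comp (by fun_prop)).continuousOn.integrableOn_compact hK
  calc ∫ x in K, fderiv ℝ (energyDensity ε u p) (t, x) (1, 0)
      = ∫ x in K, (∑ j, fderiv ℝ (energyFlux μ u p j) (t, x) (0, 𝐞 j)
          - μ * dissipationDensity u (t, x)) :=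
        setIntegral_congr_fun hK.measurableSet fun x hx =>
          (hsol x hx).energy_balance hu (hp.differentiable one_ne_zero)
    _ = ∑ j, (∫ x in K, fderiv ℝ (energyFlux μ u p j) (t, x) (0, 𝐞 j))
          - μ * ∫ x in K, dissipationDensity u (t, x) := by
        rw [integral_sub, integral_finsetSum, integral_const_mul]
        · exact fun j _ => hint (hfluxc j)
        · exact integrable_finsetSum _ fun j _ => hint (hfluxc j)
        · exact (hint (continuous_dissipationDensity (hu.of_le one_le_two))).const_mul μ
    _ = -μ * ∫ x in K, dissipationDensity u (t, x) := by simp [hflux]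

theorem energy_identity_of_isCompact {K : Set E3} (hK : IsCompact K) {T : ℝ}
    (hu : ContDiff ℝ 2 u) (hp : ContDiff ℝ 1 p)
    (hsol : ∀ t ∈ Icc 0 T, ∀ x ∈ K, SolvesAt ε μ u p (t, x))
    (hsupp : ∀ t ∈ Icc 0 T, ∀ x ∉ K, u (t, x) = 0 ∧ p (t, x) = 0) {t : ℝ} (ht : t ∈ Icc 0 T) :
    (∫ x in K, energyDensity ε u p (t, x))
      + μ * ∫ s in (0 : ℝ)..t, ∫ x in K, dissipationDensity u (s, x)
      = ∫ x in K, energyDensity ε u p (0, x) := by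
  set Φ : ℝ → ℝ := fun t => (∫ x in K, energyDensity ε u p (t, x))
    + μ * ∫ s in (0 : ℝ)..t, ∫ x in K, dissipationDensity u (s, x)
  have hD : Continuous fun s => ∫ x in K, dissipationDensity u (s, x) :=
    continuous_parametric_integral_of_continuous (f := fun s x => dissipationDensity u (s, x))
      (continuous_dissipationDensity (hu.of_le one_le_two)) hK
  have hΦ : ∀ s ∈ Icc 0 T, HasDerivAt Φ 0 s := fun s hs => by
    have hE := hasDerivAt_setIntegral_of_contDiff (μ := volume)
      (contDiff_energyDensity (ε := ε) (hu.of_le one_le_two) hp) hK s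
    rw [setIntegral_fderiv_energyDensity_time hK hu hp (hsol s hs) (hsupp s hs)] at hE
    exact (hE.add ((hD.integral_hasStrictDerivAt 0 s).hasDerivAt.const_mul μ)).congr_deriv
      (by ring)
  simpa [Φ] using constant_of_has_deriv_right_zero
    (fun s hs => (hΦ s hs).continuousAt.continuousWithinAt)
    (fun s hs => (hΦ s (Ico_subset_Icc_self hs)).hasDerivWithinAt) t ht

end ArtificialCompressibility

open ArtificialCompressibility

theorem stmt_4_general (Ω : Set (EuclideanSpace ℝ (Fin 3))) (hΩ : IsOpen Ω)
    (T ε μ : ℝ)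
    (u : ℝ × EuclideanSpace ℝ (Fin 3) → EuclideanSpace ℝ (Fin 3))
    (p : ℝ × EuclideanSpace ℝ (Fin 3) → ℝ)
    (hu : ContDiff ℝ 2 u) (hp : ContDiff ℝ 2 p)
    (K : Set (EuclideanSpace ℝ (Fin 3))) (hK : IsCompact K) (hKΩ : K ⊆ Ω)
    (hsupp : ∀ t ∈ Set.Icc (0:ℝ) T, ∀ x ∉ K, u (t, x) = 0 ∧ p (t, x) = 0)
    -- momentum equation, componentwise: ∂ₜuᵢ + ∂ᵢp = μΔuᵢ − ((u·∇)u)ᵢ − ½(div u)uᵢ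
    (hmom : ∀ t ∈ Set.Icc (0:ℝ) T, ∀ x ∈ Ω, ∀ i : Fin 3,
      fderiv ℝ u (t, x) (1, 0) i + fderiv ℝ p (t, x) (0, EuclideanSpace.single i 1)
        = μ * (∑ j, fderiv ℝ (fun y => fderiv ℝ u y (0, EuclideanSpace.single j 1) i)
              (t, x) (0, EuclideanSpace.single j 1))
          - (∑ j, u (t, x) j * fderiv ℝ u (t, x) (0, EuclideanSpace.single j 1) i)
          - (1/2) * (∑ j, fderiv ℝ u (t, x) (0, EuclideanSpace.single j 1) j) * u (t, x) i)
    -- continuity equation: ε∂ₜp + div u = 0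
    (hcont : ∀ t ∈ Set.Icc (0:ℝ) T, ∀ x ∈ Ω,
      ε * fderiv ℝ p (t, x) (1, 0)
        + (∑ j, fderiv ℝ u (t, x) (0, EuclideanSpace.single j 1) j) = 0) :
    ∀ t ∈ Set.Icc (0:ℝ) T,
      (∫ x in Ω, ((1/2) * ∑ i, (u (t, x) i) ^ 2 + (ε / 2) * (p (t, x)) ^ 2))
        + μ * ∫ s in (0:ℝ)..t, (∫ x in Ω,
            ∑ i, ∑ j, (fderiv ℝ u (s, x) (0, EuclideanSpace.single j 1) i) ^ 2)
      = ∫ x in Ω, ((1/2) * ∑ i, (u (0, x) i) ^ 2 + (ε / 2) * (p (0, x)) ^ 2) := by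
  have hsol : ∀ t ∈ Icc (0 : ℝ) T, ∀ x ∈ K, SolvesAt ε μ u p (t, x) :=
    fun t ht x hx => ⟨hmom t ht x (hKΩ hx), hcont t ht x (hKΩ hx)⟩
  have hΩK {f : E3 → ℝ} (hf : ∀ x ∉ K, f x = 0) : ∫ x in Ω, f x = ∫ x in K, f x :=
    setIntegral_eq_of_subset_of_forall_sdiff_eq_zero hΩ.measurableSet hKΩ fun x hx => hf x hx.2
  have hE : ∀ s ∈ Icc (0 : ℝ) T,
      ∫ x in Ω, energyDensity ε u p (s, x) = ∫ x in K, energyDensity ε u p (s, x) :=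
    fun s hs => hΩK fun x hx => by simp [energyDensity, hsupp s hs x hx]
  have hD : ∀ s ∈ Icc (0 : ℝ) T,
      ∫ x in Ω, dissipationDensity u (s, x) = ∫ x in K, dissipationDensity u (s, x) :=
    fun s hs => hΩK fun x hx => by
      simp [dissipationDensity, (hu.differentiable two_ne_zero _).fderiv_apply_zero_eq_zero_of_notMem
        hK.isClosed (fun y hy => (hsupp s hs y hy).1) hx]
  intro t ht
  change (∫ x in Ω, energyDensity ε u p (t, x))
      + μ * ∫ s in (0 : ℝ)..t, ∫ x in Ω, dissipationDensity u (s, x)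
    = ∫ x in Ω, energyDensity ε u p (0, x)
  rw [hE t ht, hE 0 ⟨le_rfl, ht.1.trans ht.2⟩, intervalIntegral.integral_congr fun s hs =>
    hD s (Icc_subset_Icc_right ht.2 (uIcc_of_le ht.1 ▸ hs))]
  exact energy_identity_of_isCompact hK hu (hp.of_le one_le_two) hsol hsupp ht

/-- **Energy identity for the artificial compressibility system.**
If `(u,p)` is a `C²` solution on `[0,T] × Ω` of
`∂ₜu + ∇p = μΔu − (u·∇)u − ½(div u)u`, `ε∂ₜp + div u = 0`,
with `u, p` vanishing (for `t ∈ [0,T]`) outside a compact `K ⊆ Ω`, then the energy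
`E(t) = ∫_Ω (½|u|² + (ε/2)p²) dx` satisfies
`E(t) + μ ∫₀ᵗ ∫_Ω |∇u|² dx ds = E(0)` for all `t ∈ [0,T]`. -/
theorem stmt_4 (Ω : Set (EuclideanSpace ℝ (Fin 3))) (hΩ : IsOpen Ω)
    (T ε μ : ℝ) (hT : 0 < T) (hε : 0 < ε) (hμ : 0 < μ)
    (u : ℝ × EuclideanSpace ℝ (Fin 3) → EuclideanSpace ℝ (Fin 3))
    (p : ℝ × EuclideanSpace ℝ (Fin 3) → ℝ)
    (hu : ContDiff ℝ 2 u) (hp : ContDiff ℝ 2 p)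
    (K : Set (EuclideanSpace ℝ (Fin 3))) (hK : IsCompact K) (hKΩ : K ⊆ Ω)
    (hsupp : ∀ t ∈ Set.Icc (0:ℝ) T, ∀ x ∉ K, u (t, x) = 0 ∧ p (t, x) = 0)
    -- momentum equation, componentwise: ∂ₜuᵢ + ∂ᵢp = μΔuᵢ − ((u·∇)u)ᵢ − ½(div u)uᵢ
    (hmom : ∀ t ∈ Set.Icc (0:ℝ) T, ∀ x ∈ Ω, ∀ i : Fin 3,
      fderiv ℝ u (t, x) (1, 0) i + fderiv ℝ p (t, x) (0, EuclideanSpace.single i 1)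
        = μ * (∑ j, fderiv ℝ (fun y => fderiv ℝ u y (0, EuclideanSpace.single j 1) i)
              (t, x) (0, EuclideanSpace.single j 1))
          - (∑ j, u (t, x) j * fderiv ℝ u (t, x) (0, EuclideanSpace.single j 1) i)
          - (1/2) * (∑ j, fderiv ℝ u (t, x) (0, EuclideanSpace.single j 1) j) * u (t, x) i)
    -- continuity equation: ε∂ₜp + div u = 0
    (hcont : ∀ t ∈ Set.Icc (0:ℝ) T, ∀ x ∈ Ω,
      ε * fderiv ℝ p (t, x) (1, 0)
        + (∑ j, fderiv ℝ u (t, x) (0, EuclideanSpace.single j 1) j) = 0) :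
    ∀ t ∈ Set.Icc (0:ℝ) T,
      (∫ x in Ω, ((1/2) * ∑ i, (u (t, x) i) ^ 2 + (ε / 2) * (p (t, x)) ^ 2))
        + μ * ∫ s in (0:ℝ)..t, (∫ x in Ω,
            ∑ i, ∑ j, (fderiv ℝ u (s, x) (0, EuclideanSpace.single j 1) i) ^ 2)
      = ∫ x in Ω, ((1/2) * ∑ i, (u (0, x) i) ^ 2 + (ε / 2) * (p (0, x)) ^ 2) :=
  stmt_4_general Ω hΩ T ε μ u p hu hp K hK hKΩ hsupp hmom hcont
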